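/- arXiv:2110.14367 — 2 statements merged into one kernel-verified Lean document; each statement's English description precedes it below -/
import Mathlib

section
/- Let U ⊆ ℝ² be open, let X : U → ℝ³ be differentiable at u ∈ U with X(u) ≠ 0, and let n ∈ ℝ³ satisfy ‖n‖ = 1 and ⟨n, DX(u)v⟩ = 0 for every v ∈ ℝ². Define the inverted map Ψ : U → ℝ³ by Ψ = X/‖X‖², and set ν := n − 2⟨X(u), n⟩ X(u)/‖X(u)‖². Then ‖ν‖ = 1 and ⟨ν, DΨ(u)v⟩ = 0 for every v ∈ ℝ²; that is, ν is a unit normal of the inverted surface at u. -/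
/-!
The derivative of the inversion `y ↦ y / ‖y‖²` at `x ≠ 0` is `‖x‖⁻²` times the reflection in the
hyperplane `xᗮ`, and `ν` is exactly the reflection of `n` in that hyperplane. Since the reflection is
a linear isometry, it carries the unit normal `n` of `X` to a unit vector orthogonal to
`DΨ(u) = ‖X u‖⁻² • reflection ∘ DX(u)`.
-/

open scoped RealInnerProductSpace

open EuclideanGeometry

variable {E F : Type*} [NormedAddCommGroup E] [NormedSpace ℝ E]
  [NormedAddCommGroup F] [InnerProductSpace ℝ F]

theorem Submodule.reflection_orthogonalComplement_singleton_apply_real (x v : F) :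
    (ℝ ∙ x)ᗮ.reflection v = v - (2 * ⟪x, v⟫ / ‖x‖ ^ 2) • x := by
  rw [Submodule.reflection_orthogonal_apply, Submodule.reflection_singleton_apply, neg_sub,
    two_smul, two_mul, add_div, add_smul, RCLike.ofReal_real_eq_id, id]

theorem EuclideanGeometry.inversion_zero_one (y : F) : inversion 0 1 y = (‖y‖ ^ 2)⁻¹ • y := by
  simp [inversion, inv_pow]

theorem HasFDerivAt.inv_norm_sq_smul {f : E → F} {f' : E →L[ℝ] F} {u : E}
    (hf : HasFDerivAt f f' u) (hf0 : f u ≠ 0) :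
    HasFDerivAt (fun w => (‖f w‖ ^ 2)⁻¹ • f w)
      ((‖f u‖ ^ 2)⁻¹ • ((ℝ ∙ f u)ᗮ.reflection : F →L[ℝ] F).comp f') u := by
  have hinv := (hasFDerivAt_inversion (R := 1) hf0).comp u hf
  simp only [Function.comp_def, inversion_zero_one, dist_zero_right, one_div, inv_pow,
    sub_zero] at hinv
  simpa only [ContinuousLinearMap.smul_comp] using hinv

theorem unit_normal_of_inverted_surface_general
    (X : EuclideanSpace ℝ (Fin 2) → EuclideanSpace ℝ (Fin 3))
    {u : EuclideanSpace ℝ (Fin 2)}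
    (hX : DifferentiableAt ℝ X u) (hX0 : X u ≠ 0)
    (n : EuclideanSpace ℝ (Fin 3)) (hn : ‖n‖ = 1)
    (hperp : ∀ v : EuclideanSpace ℝ (Fin 2), ⟪n, fderiv ℝ X u v⟫ = 0) :
    let Ψ : EuclideanSpace ℝ (Fin 2) → EuclideanSpace ℝ (Fin 3) :=
      fun w => (‖X w‖ ^ 2)⁻¹ • X w
    let ν : EuclideanSpace ℝ (Fin 3) :=
      n - ((2 * ⟪X u, n⟫) / ‖X u‖ ^ 2) • X u
    ‖ν‖ = 1 ∧ ∀ v : EuclideanSpace ℝ (Fin 2), ⟪ν, fderiv ℝ Ψ u v⟫ = 0 := by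
  intro Ψ ν
  have hν : ν = (ℝ ∙ X u)ᗮ.reflection n :=
    (Submodule.reflection_orthogonalComplement_singleton_apply_real _ _).symm
  have hΨ := (hX.hasFDerivAt.inv_norm_sq_smul hX0).fderiv
  refine ⟨by rw [hν, LinearIsometryEquiv.norm_map, hn], fun v => ?_⟩
  rw [hν, hΨ, smul_apply, inner_smul_right, ContinuousLinearMap.comp_apply,
    ContinuousLinearEquiv.coe_coe, LinearIsometryEquiv.coe_toContinuousLinearEquiv,
    LinearIsometryEquiv.inner_map_map, hperp v, mul_zero]

/-- If `X : U → ℝ³` is differentiable at `u` with `X u ≠ 0` and `n` is a unit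
vector orthogonal to the image of `DX(u)`, then `ν = n - 2⟨X u, n⟩ X u / ‖X u‖²` is a unit
vector orthogonal to the image of `DΨ(u)` where `Ψ = X / ‖X‖²` is the inverted surface. -/
theorem unit_normal_of_inverted_surface
    {U : Set (EuclideanSpace ℝ (Fin 2))} (hU : IsOpen U)
    (X : EuclideanSpace ℝ (Fin 2) → EuclideanSpace ℝ (Fin 3))
    {u : EuclideanSpace ℝ (Fin 2)} (hu : u ∈ U)
    (hX : DifferentiableAt ℝ X u) (hX0 : X u ≠ 0)
    (n : EuclideanSpace ℝ (Fin 3)) (hn : ‖n‖ = 1)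
    (hperp : ∀ v : EuclideanSpace ℝ (Fin 2), ⟪n, fderiv ℝ X u v⟫ = 0) :
    let Ψ : EuclideanSpace ℝ (Fin 2) → EuclideanSpace ℝ (Fin 3) :=
      fun w => (‖X w‖ ^ 2)⁻¹ • X w
    let ν : EuclideanSpace ℝ (Fin 3) :=
      n - ((2 * ⟪X u, n⟫) / ‖X u‖ ^ 2) • X u
    ‖ν‖ = 1 ∧ ∀ v : EuclideanSpace ℝ (Fin 2), ⟪ν, fderiv ℝ Ψ u v⟫ = 0 :=
  unit_normal_of_inverted_surface_general X hX hX0 n hn hperp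
end

section
/- Let U ⊆ ℝ² be open, let X : U → ℝ³ be twice continuously differentiable and conformal with positive conformal factor, i.e. ⟨∂ᵢX, ∂ⱼX⟩ = E δᵢⱼ on U with E > 0, and let n : U → ℝ³ be differentiable with ‖n‖ ≡ 1 and ⟨n, ∂ⱼX⟩ ≡ 0 on U for j = 1, 2. Then for each component index k ∈ {1, 2, 3} and at every point of U: Σ_{j=1,2} Σ_{l=1,2,3} Xˡ ( ∂ⱼnᵏ ∂ⱼXˡ − ∂ⱼnˡ ∂ⱼXᵏ ) = 0. -/
/-!
The sum over `l` is the `k`-th component of `⟨X, ∂ⱼX⟩ ∂ⱼn - ⟨X, ∂ⱼn⟩ ∂ⱼX`. Since `n ⊥ ∂ⱼn` and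
`(∂₁X, ∂₂X, n)` is an orthogonal frame, `∂ⱼn = E⁻¹ Σᵢ ⟨∂ᵢX, ∂ⱼn⟩ ∂ᵢX`, and differentiating
`⟨n, ∂ᵢX⟩ = 0` together with `∂ⱼ∂ᵢX = ∂ᵢ∂ⱼX` shows that this coefficient matrix is symmetric.
For `∂ⱼn` given by a symmetric matrix in the frame `(∂₁X, ∂₂X)`, the diagonal terms of
`Σⱼ (⟨X, ∂ⱼX⟩ ∂ⱼn - ⟨X, ∂ⱼn⟩ ∂ⱼX)` vanish individually and the two off-diagonal ones cancel.
-/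

open scoped RealInnerProductSpace

/-- The partial derivative in the `j`-th coordinate direction of a map defined on `ℝ²`. -/
noncomputable def pd {F : Type*} [NormedAddCommGroup F] [NormedSpace ℝ F]
    (j : Fin 2) (X : EuclideanSpace ℝ (Fin 2) → F) (u : EuclideanSpace ℝ (Fin 2)) : F :=
  fderiv ℝ X u (EuclideanSpace.single j 1)

theorem ContDiffAt.differentiableAt_fderiv {𝕜 E F : Type*} [NontriviallyNormedField 𝕜]
    [NormedAddCommGroup E] [NormedSpace 𝕜 E] [NormedAddCommGroup F] [NormedSpace 𝕜 F]
    {f : E → F} {x : E} (hf : ContDiffAt 𝕜 2 f x) : DifferentiableAt 𝕜 (fderiv 𝕜 f) x :=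
  (hf.fderiv_right (m := 1) le_rfl).differentiableAt one_ne_zero

section PartialDerivatives

variable {F : Type*} [NormedAddCommGroup F] {u : EuclideanSpace ℝ (Fin 2)}

theorem pd_eq_zero_of_eventuallyEq_const [NormedSpace ℝ F] {f : EuclideanSpace ℝ (Fin 2) → F}
    {c : F} (hf : f =ᶠ[nhds u] fun _ => c) (j : Fin 2) : pd j f u = 0 := by
  simp [pd, hf.fderiv_eq]

theorem pd_pd [NormedSpace ℝ F] {X : EuclideanSpace ℝ (Fin 2) → F}
    (hX : DifferentiableAt ℝ (fderiv ℝ X) u) (i j : Fin 2) :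
    pd i (pd j X) u =
      fderiv ℝ (fderiv ℝ X) u (EuclideanSpace.single i 1) (EuclideanSpace.single j 1) := by
  change fderiv ℝ (fun v => fderiv ℝ X v _) u _ = _
  simp [fderiv_clm_apply hX (differentiableAt_const _)]

theorem pd_pd_comm [NormedSpace ℝ F] {X : EuclideanSpace ℝ (Fin 2) → F}
    (hX : ContDiffAt ℝ 2 X u) (i j : Fin 2) : pd i (pd j X) u = pd j (pd i X) u := by
  rw [pd_pd hX.differentiableAt_fderiv, pd_pd hX.differentiableAt_fderiv,
    (hX.isSymmSndFDerivAt (by simp)).eq]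

theorem differentiableAt_pd [NormedSpace ℝ F] {X : EuclideanSpace ℝ (Fin 2) → F}
    (hX : ContDiffAt ℝ 2 X u) (j : Fin 2) : DifferentiableAt ℝ (pd j X) u :=
  hX.differentiableAt_fderiv.clm_apply (differentiableAt_const _)

variable [InnerProductSpace ℝ F] {f g : EuclideanSpace ℝ (Fin 2) → F}

theorem pd_inner (hf : DifferentiableAt ℝ f u) (hg : DifferentiableAt ℝ g u) (j : Fin 2) :
    pd j (fun v => ⟪f v, g v⟫) u = ⟪f u, pd j g u⟫ + ⟪pd j f u, g u⟫ :=
  fderiv_inner_apply ℝ hf hg _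

theorem inner_pd_add_inner_pd_eq_zero (hf : DifferentiableAt ℝ f u)
    (hg : DifferentiableAt ℝ g u) {c : ℝ} (hfg : ∀ᶠ v in nhds u, ⟪f v, g v⟫ = c) (j : Fin 2) :
    ⟪f u, pd j g u⟫ + ⟪pd j f u, g u⟫ = 0 := by
  rw [← pd_inner hf hg, pd_eq_zero_of_eventuallyEq_const hfg]

end PartialDerivatives

section Algebra

variable {F : Type*} [NormedAddCommGroup F] [InnerProductSpace ℝ F]

theorem eq_zero_of_forall_inner_eq_zero_of_orthogonal_family [FiniteDimensional ℝ F]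
    {ι : Type*} [Fintype ι] {v : ι → F} (hv0 : ∀ i, v i ≠ 0)
    (hv : Pairwise fun i j => ⟪v i, v j⟫ = 0) (hcard : Fintype.card ι = Module.finrank ℝ F)
    {w : F} (hw : ∀ i, ⟪v i, w⟫ = 0) : w = 0 := by
  let b := basisOfLinearIndependentOfCardEqFinrank' v
    (linearIndependent_of_ne_zero_of_inner_eq_zero hv0 hv) hcard
  exact InnerProductSpace.ext_inner_left_basis b fun i => by simpa [b] using hw i

theorem eq_smul_add_smul_of_inner_eq_zero (hF : Module.finrank ℝ F = 3)
    {p q m w : F} {e : ℝ} (he : e ≠ 0) (hpp : ⟪p, p⟫ = e) (hqq : ⟪q, q⟫ = e)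
    (hpq : ⟪p, q⟫ = 0) (hm : m ≠ 0) (hmp : ⟪m, p⟫ = 0) (hmq : ⟪m, q⟫ = 0)
    (hmw : ⟪m, w⟫ = 0) :
    w = (e⁻¹ * ⟪p, w⟫) • p + (e⁻¹ * ⟪q, w⟫) • q := by
  have : FiniteDimensional ℝ F := .of_finrank_eq_succ hF
  have hp : p ≠ 0 := by rintro rfl; simp [eq_comm, he] at hpp
  have hq : q ≠ 0 := by rintro rfl; simp [eq_comm, he] at hqq
  have hqp : ⟪q, p⟫ = 0 := by rw [real_inner_comm, hpq]
  rw [← sub_eq_zero]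
  refine eq_zero_of_forall_inner_eq_zero_of_orthogonal_family (v := ![p, q, m]) ?_ ?_
    (by simp [hF]) ?_
  · intro i
    fin_cases i <;> simpa
  · intro i j hij
    fin_cases i <;> fin_cases j <;> simp_all [real_inner_comm]
  · intro i
    fin_cases i <;>
      simp only [Fin.zero_eta, Fin.mk_one, Fin.reduceFinMk, Matrix.cons_val, inner_sub_right,
        inner_add_right, inner_smul_right, hpp, hqq, hpq, hqp, hmp, hmq, hmw] <;>
      field_simp <;> ring

theorem inner_smul_sub_inner_smul_add_eq_zero {p q b₀ b₁ : F} {a c d : ℝ}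
    (hb₀ : b₀ = a • p + c • q) (hb₁ : b₁ = c • p + d • q) (w : F) :
    (⟪w, p⟫ • b₀ - ⟪w, b₀⟫ • p) + (⟪w, q⟫ • b₁ - ⟪w, b₁⟫ • q) = 0 := by
  subst hb₀ hb₁
  simp only [inner_add_right, inner_smul_right]
  module

end Algebra

section Surface

variable {F : Type*} [NormedAddCommGroup F] [InnerProductSpace ℝ F]
  {u : EuclideanSpace ℝ (Fin 2)}

theorem inner_pd_eq_zero_of_norm_eq_one {n : EuclideanSpace ℝ (Fin 2) → F}
    (hn : DifferentiableAt ℝ n u) (hn1 : ∀ᶠ v in nhds u, ‖n v‖ = 1) (j : Fin 2) :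
    ⟪n u, pd j n u⟫ = 0 := by
  have h := inner_pd_add_inner_pd_eq_zero hn hn (c := 1)
    (hn1.mono fun v hv => by rw [real_inner_self_eq_norm_sq, hv, one_pow]) j
  linarith [real_inner_comm (n u) (pd j n u)]

theorem inner_pd_swap_of_inner_pd_eq_zero {X n : EuclideanSpace ℝ (Fin 2) → F}
    (hX : ContDiffAt ℝ 2 X u) (hn : DifferentiableAt ℝ n u)
    (hperp : ∀ i, ∀ᶠ v in nhds u, ⟪n v, pd i X v⟫ = 0) (i j : Fin 2) :
    ⟪pd i X u, pd j n u⟫ = ⟪pd j X u, pd i n u⟫ := by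
  have hij := inner_pd_add_inner_pd_eq_zero hn (differentiableAt_pd hX i) (hperp i) j
  have hji := inner_pd_add_inner_pd_eq_zero hn (differentiableAt_pd hX j) (hperp j) i
  rw [pd_pd_comm hX] at hij
  linarith [real_inner_comm (pd i X u) (pd j n u), real_inner_comm (pd j X u) (pd i n u)]

end Surface

theorem sum_mul_sub_mul_eq_apply {ι : Type*} [Fintype ι] (x a b : EuclideanSpace ℝ ι) (k : ι) :
    ∑ l, x l * (b k * a l - b l * a k) = (⟪x, a⟫ • b - ⟪x, b⟫ • a) k := by
  simp only [PiLp.inner_apply, RCLike.inner_apply, conj_trivial, PiLp.sub_apply,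
    PiLp.smul_apply, smul_eq_mul, Finset.sum_mul, ← Finset.sum_sub_distrib]
  exact Finset.sum_congr rfl fun l _ => by ring

/-- For a conformal `C²` immersion `X : U → ℝ³` with conformal factor
`E > 0` and differentiable unit normal field `n`, the antisymmetric sum
`Σⱼ Σₗ Xˡ (∂ⱼnᵏ ∂ⱼXˡ − ∂ⱼnˡ ∂ⱼXᵏ)` vanishes for each component index `k`. -/
theorem antisymmetric_cancellation
    {U : Set (EuclideanSpace ℝ (Fin 2))} (hU : IsOpen U)
    (X : EuclideanSpace ℝ (Fin 2) → EuclideanSpace ℝ (Fin 3))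
    (hC : ContDiffOn ℝ 2 X U)
    (E : EuclideanSpace ℝ (Fin 2) → ℝ) (hE : ∀ u ∈ U, 0 < E u)
    (hconf : ∀ u ∈ U, ∀ i j : Fin 2, ⟪pd i X u, pd j X u⟫ = if i = j then E u else 0)
    (n : EuclideanSpace ℝ (Fin 2) → EuclideanSpace ℝ (Fin 3))
    (hn : ∀ u ∈ U, DifferentiableAt ℝ n u)
    (hn1 : ∀ u ∈ U, ‖n u‖ = 1)
    (hperp : ∀ u ∈ U, ∀ j : Fin 2, ⟪n u, pd j X u⟫ = 0) :
    ∀ u ∈ U, ∀ k : Fin 3,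
      ∑ j : Fin 2, ∑ l : Fin 3,
        X u l * (pd j n u k * pd j X u l - pd j n u l * pd j X u k) = 0 := by
  intro u hu k
  have hU_nhds := hU.mem_nhds hu
  have hX : ContDiffAt ℝ 2 X u := hC.contDiffAt hU_nhds
  have hperp_nhds (i : Fin 2) : ∀ᶠ v in nhds u, ⟪n v, pd i X v⟫ = 0 :=
    Filter.mem_of_superset hU_nhds fun v hv => hperp v hv i
  have hexpand (j : Fin 2) : pd j n u =
      ((E u)⁻¹ * ⟪pd 0 X u, pd j n u⟫) • pd 0 X u + ((E u)⁻¹ * ⟪pd 1 X u, pd j n u⟫) • pd 1 X u :=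
    eq_smul_add_smul_of_inner_eq_zero (by simp) (hE u hu).ne' (by simpa using hconf u hu 0 0)
      (by simpa using hconf u hu 1 1) (by simpa using hconf u hu 0 1)
      (norm_ne_zero_iff.mp (by simp [hn1 u hu])) (hperp u hu 0) (hperp u hu 1)
      (inner_pd_eq_zero_of_norm_eq_one (hn u hu) (Filter.mem_of_superset hU_nhds hn1) j)
  have hexpand₁ := hexpand 1
  rw [inner_pd_swap_of_inner_pd_eq_zero hX (hn u hu) hperp_nhds 0 1] at hexpand₁
  have hcancel := inner_smul_sub_inner_smul_add_eq_zero (hexpand 0) hexpand₁ (X u)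
  calc ∑ j : Fin 2, ∑ l : Fin 3, X u l * (pd j n u k * pd j X u l - pd j n u l * pd j X u k)
      = (∑ j : Fin 2, (⟪X u, pd j X u⟫ • pd j n u - ⟪X u, pd j n u⟫ • pd j X u)) k := by
        simp only [sum_mul_sub_mul_eq_apply, WithLp.ofLp_sum, Finset.sum_apply]
    _ = 0 := by rw [Fin.sum_univ_two, hcancel]; rfl
end
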